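/- arXiv:2405.12248 — 2 statements merged into one kernel-verified Lean document; each statement's English description precedes it below -/
import Mathlib

section
/- Σ_{n=1}^{∞} (-1)^{n-1}/(2n-1)^{5} = 5·π^{5}/1536. -/
open Real Set Nat

/-!
Evaluate the Fourier series `∑ sin (2πnx) / n ^ (2k+1)` of the Bernoulli polynomial `B_{2k+1}` at
`x = 1/4`: there `sin (πn/2)` vanishes for even `n` and equals `(-1) ^ m` for `n = 2m + 1`, which
leaves the Dirichlet beta value. For `k = 2`, `B₅(1/4) = -25/1024`.
-/

theorem hasSum_odd_iff_of_even_eq_zero {M : Type*} [AddCommMonoid M] [TopologicalSpace M]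
    {f : ℕ → M} (hf : ∀ n, f (2 * n) = 0) {a : M} :
    HasSum (fun n => f (2 * n + 1)) a ↔ HasSum f a := by
  refine Function.Injective.hasSum_iff (fun a b h => by simpa using h) fun m hm => ?_
  obtain ⟨n, rfl | rfl⟩ := Nat.even_or_odd' m
  · exact hf n
  · exact absurd ⟨n, rfl⟩ hm

theorem sin_pi_mul_even_div_two (n : ℕ) : sin (π * (2 * n : ℕ) / 2) = 0 := by
  push_cast
  rw [show π * (2 * n) / 2 = n * π by ring, sin_nat_mul_pi]

theorem sin_pi_mul_odd_div_two (n : ℕ) : sin (π * (2 * n + 1 : ℕ) / 2) = (-1) ^ n := by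
  push_cast
  rw [show π * (2 * n + 1) / 2 = n * π + π / 2 by ring, sin_add_pi_div_two, cos_nat_mul_pi]

theorem hasSum_neg_one_pow_div_odd_pow {k : ℕ} (hk : k ≠ 0) :
    HasSum (fun n : ℕ => (-1 : ℝ) ^ n / (2 * n + 1) ^ (2 * k + 1))
      ((-1 : ℝ) ^ (k + 1) * (2 * π) ^ (2 * k + 1) / 2 / (2 * k + 1)! *
        (Polynomial.map (algebraMap ℚ ℝ) (Polynomial.bernoulli (2 * k + 1))).eval (1 / 4)) := by
  have h := hasSum_one_div_nat_pow_mul_sin hk (x := 1 / 4) ⟨by norm_num, by norm_num⟩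
  have hx : ∀ n : ℕ, 2 * π * n * (1 / 4) = π * n / 2 := fun n => by ring
  simp_rw [hx] at h
  rw [← hasSum_odd_iff_of_even_eq_zero fun n => by
    simp only [sin_pi_mul_even_div_two, mul_zero]] at h
  convert h using 2 with n
  rw [sin_pi_mul_odd_div_two]
  push_cast
  ring

theorem bernoulli_five_eval_one_div_four :
    (Polynomial.bernoulli 5).eval (1 / 4 : ℚ) = -25 / 1024 := by
  norm_num [Polynomial.bernoulli, Finset.sum_range_succ, bernoulli_eq_bernoulli'_of_ne_one,
    bernoulli'_three, bernoulli'_four, bernoulli'_eq_zero_of_odd (by decide : Odd 5), Nat.choose]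

theorem stmt_11 : ∑' n : ℕ, (-1 : ℝ) ^ n / (2 * (n : ℝ) + 1) ^ 5 = 5 * π ^ 5 / 1536 := by
  have h := hasSum_neg_one_pow_div_odd_pow (k := 2) two_ne_zero
  rw [show (1 / 4 : ℝ) = algebraMap ℚ ℝ (1 / 4) by norm_num, Polynomial.eval_map,
    Polynomial.eval₂_at_apply, bernoulli_five_eval_one_div_four] at h
  refine h.tsum_eq.trans ?_
  norm_num [Nat.factorial]
  ring
end

section
/- Σ_{n=1}^{∞} (-1)^{n-1}/(2n-1)^{7} = 61·π^{7}/184320. -/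
/-!
The Fourier series of the odd Bernoulli polynomials,
`∑ sin (2πnx) / n^(2k+1) = (-1)^(k+1) (2π)^(2k+1) / (2 (2k+1)!) · B_{2k+1}(x)` on `[0, 1]`,
evaluated at `x = 1/4` keeps only the odd `n = 2m + 1`, with sign `(-1)^m`. For `k = 3` this gives
the value from `B₇(1/4) = 427/16384`.
-/

open Real Finset Nat

theorem bernoulli'_six : bernoulli' 6 = 1 / 42 := by
  rw [bernoulli'_def]
  norm_num [Nat.choose, sum_range_succ, bernoulli'_eq_zero_of_odd (n := 5) (by decide) (by norm_num)]

theorem Polynomial.bernoulli_seven_eval_one_div_four :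
    (Polynomial.bernoulli 7).eval (1 / 4 : ℚ) = 427 / 16384 := by
  simp only [Polynomial.bernoulli, sum_range_succ, Polynomial.eval_add, Polynomial.eval_monomial,
    sum_range_zero, zero_add]
  rw [bernoulli_eq_zero_of_odd (n := 3) (by decide) (by norm_num),
    bernoulli_eq_zero_of_odd (n := 5) (by decide) (by norm_num),
    bernoulli_eq_zero_of_odd (n := 7) (by decide) (by norm_num),
    bernoulli_eq_bernoulli'_of_ne_one (by norm_num : 2 ≠ 1), bernoulli'_two,
    bernoulli_eq_bernoulli'_of_ne_one (by norm_num : 4 ≠ 1), bernoulli'_four,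
    bernoulli_eq_bernoulli'_of_ne_one (by norm_num : 6 ≠ 1), bernoulli'_six]
  norm_num [Nat.choose]

theorem sin_two_mul_pi_mul_even_div_four (m : ℕ) :
    sin (2 * π * (2 * m : ℕ) * (1 / 4)) = 0 := by
  rw [← sin_nat_mul_pi m]
  congr 1
  push_cast
  ring

theorem sin_two_mul_pi_mul_odd_div_four (m : ℕ) :
    sin (2 * π * (2 * m + 1 : ℕ) * (1 / 4)) = (-1) ^ m := by
  rw [← cos_nat_mul_pi m, ← sin_add_pi_div_two]
  congr 1
  push_cast
  ring

theorem hasSum_neg_one_pow_div_two_mul_add_one_pow {k : ℕ} (hk : k ≠ 0) :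
    HasSum (fun m : ℕ => (-1 : ℝ) ^ m / (2 * m + 1) ^ (2 * k + 1))
      ((-1 : ℝ) ^ (k + 1) * (2 * π) ^ (2 * k + 1) / 2 / (2 * k + 1)! *
        (Polynomial.map (algebraMap ℚ ℝ) (Polynomial.bernoulli (2 * k + 1))).eval (1 / 4)) := by
  have hfourier := hasSum_one_div_nat_pow_mul_sin hk (x := 1 / 4) ⟨by norm_num, by norm_num⟩
  have hodd : Function.Injective (fun m : ℕ => 2 * m + 1) := fun a b h => by simpa using h
  refine ((hodd.hasSum_iff ?_).mpr hfourier).congr_fun fun m => ?_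
  · rintro n hn
    obtain ⟨m, rfl⟩ : Even n := Nat.not_odd_iff_even.mp fun ⟨m, hm⟩ => hn ⟨m, hm.symm⟩
    rw [← two_mul, sin_two_mul_pi_mul_even_div_four, mul_zero]
  · simp only [Function.comp_apply, sin_two_mul_pi_mul_odd_div_four]
    push_cast
    ring

theorem stmt_12 : ∑' n : ℕ, (-1 : ℝ) ^ n / (2 * (n : ℝ) + 1) ^ 7 = 61 * π ^ 7 / 184320 := by
  refine (hasSum_neg_one_pow_div_two_mul_add_one_pow three_ne_zero).tsum_eq.trans ?_
  rw [show (1 / 4 : ℝ) = algebraMap ℚ ℝ (1 / 4) by norm_num, Polynomial.eval_map,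
    Polynomial.eval₂_at_apply, Polynomial.bernoulli_seven_eval_one_div_four]
  norm_num [Nat.factorial]
  ring
end
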